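/- arXiv:1410.8191 — 4 statements merged into one kernel-verified Lean document; each statement's English description precedes it below -/
import Mathlib

section
/- Let U ⊆ ℝ^N be open, ω^{ij} an antisymmetric smooth bivector field on U and Γ^i_{jk} smooth connection coefficients on U. Define for smooth functions a, b on U the bracket {a,b} = ω^{ij} ∂_i a ∂_j b, the Hamiltonian vector field â = ω^{ij} ∂_i a ∂_j, and the covariant derivative ∇_{â} db := ω^{ij} ∂_i a (∂_j ∂_k b − Γ^l_{jk} ∂_l b) dx^k. Then d{a,b} = ∇_{â} db − ∇_{b̂} da holds for all smooth a, b if and only if ω^{ij}_{;m} + ω^{ik} T^j_{km} − ω^{jk} T^i_{km} = 0 for all i,j,m, where T^i_{jk} = Γ^i_{jk} − Γ^i_{kj} is the torsion and ω^{ij}_{;m} = ∂_m ω^{ij} + Γ^i_{ml} ω^{lj} + Γ^j_{ml} ω^{il} is the covariant derivative of ω. -/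
open scoped BigOperators

/-- The `i`-th partial derivative of `f : ℝ^N → ℝ` at `x`. -/
noncomputable def pd {N : ℕ} (f : (Fin N → ℝ) → ℝ) (i : Fin N) (x : Fin N → ℝ) : ℝ :=
  fderiv ℝ f x (Pi.single i 1)

lemma pd_const {N : ℕ} (c : ℝ) (i : Fin N) (x : Fin N → ℝ) :
    pd (fun _ => c) i x = 0 := by simp [pd]

lemma pd_coord {N : ℕ} (i j : Fin N) (x : Fin N → ℝ) :
    pd (fun y => y i) j x = if i = j then 1 else 0 := by
  have h : fderiv ℝ (fun y : Fin N → ℝ => y i) x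
      = ContinuousLinearMap.proj (R := ℝ) (φ := fun _ : Fin N => ℝ) i :=
    (ContinuousLinearMap.proj (R := ℝ) (φ := fun _ : Fin N => ℝ) i).fderiv
  simp [pd, h, Pi.single_apply]

lemma coord_contDiffOn {N : ℕ} (i : Fin N) (U : Set (Fin N → ℝ)) :
    ContDiffOn ℝ (⊤ : ℕ∞) (fun y : Fin N → ℝ => y i) U :=
  ((ContinuousLinearMap.proj (R := ℝ) (φ := fun _ : Fin N => ℝ) i).contDiff).contDiffOn

lemma pd_mul {N : ℕ} {f g : (Fin N → ℝ) → ℝ} {x : Fin N → ℝ}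
    (hf : DifferentiableAt ℝ f x) (hg : DifferentiableAt ℝ g x) (k : Fin N) :
    pd (fun y => f y * g y) k x = pd f k x * g x + f x * pd g k x := by
  show fderiv ℝ (fun y => f y * g y) x (Pi.single k 1) = _
  rw [fderiv_fun_mul hf hg]
  simp [pd]; ring

lemma pd_sum {N n : ℕ} {f : Fin n → (Fin N → ℝ) → ℝ} {x : Fin N → ℝ}
    (hf : ∀ i, DifferentiableAt ℝ (f i) x) (k : Fin N) :
    pd (fun y => ∑ i, f i y) k x = ∑ i, pd (f i) k x := by
  show fderiv ℝ (fun y => ∑ i, f i y) x (Pi.single k 1) = _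
  rw [fderiv_fun_sum (fun i _ => hf i)]
  simp [pd]

lemma pd_differentiableAt {N : ℕ} {a : (Fin N → ℝ) → ℝ} {x : Fin N → ℝ}
    (ha : ContDiffAt ℝ (⊤ : ℕ∞) a x) (i : Fin N) :
    DifferentiableAt ℝ (fun y => pd a i y) x := by
  have h1 : ContDiffAt ℝ 1 (fderiv ℝ a) x := ha.fderiv_right (WithTop.coe_le_coe.mpr le_top)
  exact (h1.differentiableAt one_ne_zero).clm_apply (differentiableAt_const _)

lemma pd_symm {N : ℕ} {a : (Fin N → ℝ) → ℝ} {x : Fin N → ℝ}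
    (ha : ContDiffAt ℝ (⊤ : ℕ∞) a x) (i m : Fin N) :
    pd (fun y => pd a i y) m x = pd (fun y => pd a m y) i x := by
  have hsymm := ha.isSymmSndFDerivAt (by rw [minSmoothness_of_isRCLikeNormedField]; exact WithTop.coe_le_coe.mpr le_top)
  have hd : DifferentiableAt ℝ (fderiv ℝ a) x :=
    ((ha.fderiv_right ((WithTop.coe_le_coe.mpr le_top))).differentiableAt one_ne_zero)
  have key : ∀ p q : Fin N, pd (fun y => pd a p y) q x
      = fderiv ℝ (fderiv ℝ a) x (Pi.single q 1) (Pi.single p 1) := by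
    intro p q
    show fderiv ℝ (fun y => (fderiv ℝ a y) (Pi.single p 1)) x (Pi.single q 1) = _
    rw [fderiv_clm_apply hd (differentiableAt_const _)]
    simp
  rw [key, key, hsymm]

lemma swap_anti {N : ℕ} (w : Fin N → Fin N → ℝ) (f : Fin N → Fin N → ℝ)
    (hanti : ∀ i j, w i j = -w j i) :
    ∑ i, ∑ j, w i j * f i j = -∑ i, ∑ j, w i j * f j i := by
  rw [Finset.sum_comm, ← Finset.sum_neg_distrib]
  refine Finset.sum_congr rfl fun j _ => ?_
  rw [← Finset.sum_neg_distrib]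
  refine Finset.sum_congr rfl fun i _ => ?_
  rw [hanti i j]; ring

lemma sum_alg {N : ℕ} (w dw g : Fin N → Fin N → ℝ) (A B A2 B2 : Fin N → ℝ)
    (hanti : ∀ i j, w i j = -w j i)
    (hdw : ∀ i j, dw i j = -∑ l, w i l * g j l + ∑ l, w j l * g i l) :
    ∑ i, ∑ j, (dw i j * A i * B j + w i j * A2 i * B j + w i j * A i * B2 j)
      = (∑ i, ∑ j, w i j * A i * (B2 j - ∑ l, g l j * B l))
        - ∑ i, ∑ j, w i j * B i * (A2 j - ∑ l, g l j * A l) := by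
  have c2 : ∀ (P Q : Fin N → ℝ), ∑ i, ∑ j, w i j * P i * (∑ l, g l j * Q l)
      = ∑ i, ∑ j, (∑ l, w i l * g j l) * P i * Q j := by
    intro P Q
    refine Finset.sum_congr rfl fun i _ => ?_
    simp_rw [Finset.mul_sum, Finset.sum_mul]
    rw [Finset.sum_comm]
    exact Finset.sum_congr rfl fun p _ => Finset.sum_congr rfl fun q _ => by ring
  have expand : ∀ (P P2 Q : Fin N → ℝ), ∑ i, ∑ j, w i j * P i * (P2 j - ∑ l, g l j * Q l)
      = (∑ i, ∑ j, w i j * P i * P2 j) - ∑ i, ∑ j, (∑ l, w i l * g j l) * P i * Q j := by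
    intro P P2 Q
    rw [← c2]
    simp_rw [mul_sub, Finset.sum_sub_distrib]
  rw [expand A B2 B, expand B A2 A]
  have c1 : ∑ i, ∑ j, w i j * A2 i * B j = -∑ i, ∑ j, w i j * B i * A2 j := by
    have h := swap_anti w (fun i j => B j * A2 i) hanti
    calc ∑ i, ∑ j, w i j * A2 i * B j = ∑ i, ∑ j, w i j * (B j * A2 i) := by
          exact Finset.sum_congr rfl fun i _ => Finset.sum_congr rfl fun j _ => by ring
      _ = -∑ i, ∑ j, w i j * (B i * A2 j) := h
      _ = -∑ i, ∑ j, w i j * B i * A2 j := by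
          exact congrArg _ (Finset.sum_congr rfl fun i _ => Finset.sum_congr rfl fun j _ => by ring)
  have c3 : ∑ i, ∑ j, (∑ l, w j l * g i l) * A i * B j
      = ∑ i, ∑ j, (∑ l, w i l * g j l) * B i * A j := by
    rw [Finset.sum_comm]
    exact Finset.sum_congr rfl fun p _ => Finset.sum_congr rfl fun q _ => by ring
  have cdw : ∑ i, ∑ j, dw i j * A i * B j
      = -(∑ i, ∑ j, (∑ l, w i l * g j l) * A i * B j)
        + ∑ i, ∑ j, (∑ l, w i l * g j l) * B i * A j := by
    rw [← c3]
    simp_rw [hdw, add_mul, neg_mul, Finset.sum_add_distrib, Finset.sum_neg_distrib]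
  simp_rw [Finset.sum_add_distrib]
  rw [cdw, c1]
  ring

/-- Normalisation of the compatibility expression using antisymmetry of `w`. -/
lemma big_eq {N : ℕ} (dw : ℝ) (w : Fin N → Fin N → ℝ) (G : Fin N → Fin N → Fin N → ℝ)
    (i j m : Fin N) (hanti : ∀ p q, w p q = -w q p) :
    (dw + ∑ l, G i m l * w l j + ∑ l, G j m l * w i l)
      + (∑ k, w i k * (G j k m - G j m k)) - (∑ k, w j k * (G i k m - G i m k))
    = dw + ∑ l, w i l * G j l m - ∑ l, w j l * G i l m := by
  have h1 : ∑ l, G i m l * w l j = -∑ l, w j l * G i m l := by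
    rw [← Finset.sum_neg_distrib]
    exact Finset.sum_congr rfl fun l _ => by rw [hanti l j]; ring
  have h2 : ∑ l, G j m l * w i l = ∑ l, w i l * G j m l :=
    Finset.sum_congr rfl fun l _ => mul_comm _ _
  have h3 : ∀ p q : Fin N, ∑ s, w p s * (G q s m - G q m s)
      = ∑ s, w p s * G q s m - ∑ s, w p s * G q m s := by
    intro p q; simp_rw [mul_sub, Finset.sum_sub_distrib]
  rw [h1, h2, h3, h3]
  ring

/-- on an open set `U ⊆ ℝ^N`, with antisymmetric smooth bivector `ω`
and smooth connection coefficients `Γ`, the Poisson-compatibility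
`d{a,b} = ∇_{â} db − ∇_{b̂} da` holds for all smooth `a, b` iff
`ω^{ij}_{;m} + ω^{ik} T^j_{km} − ω^{jk} T^i_{km} = 0` on `U`. -/
theorem poisson_compatibility_iff
    {N : ℕ} (U : Set (Fin N → ℝ)) (hU : IsOpen U)
    (ω : (Fin N → ℝ) → Fin N → Fin N → ℝ)
    (Γ : (Fin N → ℝ) → Fin N → Fin N → Fin N → ℝ)
    (hω : ∀ i j, ContDiffOn ℝ (⊤ : ℕ∞) (fun x => ω x i j) U)
    (hωanti : ∀ x ∈ U, ∀ i j, ω x i j = -ω x j i)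
    (hΓ : ∀ i j k, ContDiffOn ℝ (⊤ : ℕ∞) (fun x => Γ x i j k) U) :
    (∀ a b : (Fin N → ℝ) → ℝ, ContDiffOn ℝ (⊤ : ℕ∞) a U → ContDiffOn ℝ (⊤ : ℕ∞) b U →
      ∀ x ∈ U, ∀ k : Fin N,
        pd (fun y => ∑ i, ∑ j, ω y i j * pd a i y * pd b j y) k x
          = (∑ i, ∑ j, ω x i j * pd a i x *
              (pd (fun y => pd b k y) j x - ∑ l, Γ x l j k * pd b l x))
            - (∑ i, ∑ j, ω x i j * pd b i x *
              (pd (fun y => pd a k y) j x - ∑ l, Γ x l j k * pd a l x)))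
    ↔
    (∀ x ∈ U, ∀ i j m : Fin N,
      (pd (fun y => ω y i j) m x + ∑ l, Γ x i m l * ω x l j + ∑ l, Γ x j m l * ω x i l)
        + (∑ k, ω x i k * (Γ x j k m - Γ x j m k))
        - (∑ k, ω x j k * (Γ x i k m - Γ x i m k)) = 0) := by
  constructor
  · -- compatibility ⇒ pointwise identity: test with coordinate functions
    intro H x hx i j m
    have HH := H (fun y => y i) (fun y => y j) (coord_contDiffOn i U) (coord_contDiffOn j U) x hx m
    have e1 : (fun y => ∑ i', ∑ j',
        ω y i' j' * pd (fun z => z i) i' y * pd (fun z => z j) j' y) = fun y => ω y i j := by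
      funext y
      simp [pd_coord, mul_ite, ite_mul, mul_one, mul_zero, zero_mul,
        Finset.sum_ite_eq, Finset.mem_univ]
    rw [e1] at HH
    simp only [pd_coord, pd_const, mul_ite, ite_mul, mul_one, mul_zero, zero_mul,
      Finset.sum_ite_eq, Finset.mem_univ, if_true, zero_sub, mul_neg,
      Finset.sum_neg_distrib] at HH
    have collapse : ∀ (f : Fin N → Fin N → ℝ) (p : Fin N),
        ∑ x1, ∑ x2, (if p = x1 then f x1 x2 else 0) = ∑ x2, f p x2 := by
      intro f p
      rw [Finset.sum_comm]
      simp [Finset.sum_ite_eq]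
    simp only [collapse] at HH
    rw [big_eq (pd (fun y => ω y i j) m x) (ω x) (Γ x) i j m (hωanti x hx)]
    linarith [HH]
  · -- pointwise identity ⇒ compatibility
    intro H a b ha hb x hx k
    have hax : ContDiffAt ℝ (⊤ : ℕ∞) a x := ha.contDiffAt (hU.mem_nhds hx)
    have hbx : ContDiffAt ℝ (⊤ : ℕ∞) b x := hb.contDiffAt (hU.mem_nhds hx)
    have dA : ∀ i, DifferentiableAt ℝ (fun y => pd a i y) x := pd_differentiableAt hax
    have dB : ∀ i, DifferentiableAt ℝ (fun y => pd b i y) x := pd_differentiableAt hbx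
    have dω : ∀ i j, DifferentiableAt ℝ (fun y => ω y i j) x := fun i j =>
      (((hω i j).contDiffAt (hU.mem_nhds hx))).differentiableAt (by simp)
    have hterm : ∀ i j, DifferentiableAt ℝ (fun y => ω y i j * pd a i y * pd b j y) x :=
      fun i j => ((dω i j).mul (dA i)).mul (dB j)
    have hinner : ∀ i, DifferentiableAt ℝ (fun y => ∑ j, ω y i j * pd a i y * pd b j y) x :=
      fun i => DifferentiableAt.fun_sum (fun j _ => hterm i j)
    have step : ∀ i j, pd (fun y => ω y i j * pd a i y * pd b j y) k x
        = pd (fun y => ω y i j) k x * pd a i x * pd b j x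
          + ω x i j * pd (fun y => pd a k y) i x * pd b j x
          + ω x i j * pd a i x * pd (fun y => pd b k y) j x := by
      intro i j
      rw [pd_mul ((dω i j).fun_mul (dA i)) (dB j) k, pd_mul (dω i j) (dA i) k,
        pd_symm hax i k, pd_symm hbx j k]
      ring
    have hdw : ∀ i j, pd (fun y => ω y i j) k x
        = -∑ l, ω x i l * Γ x j l k + ∑ l, ω x j l * Γ x i l k := by
      intro i j
      have hB := H x hx i j k
      have hE := big_eq (pd (fun y => ω y i j) k x) (ω x) (Γ x) i j k (hωanti x hx)
      rw [hE] at hB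
      linarith [hB]
    calc pd (fun y => ∑ i, ∑ j, ω y i j * pd a i y * pd b j y) k x
        = ∑ i, pd (fun y => ∑ j, ω y i j * pd a i y * pd b j y) k x := pd_sum hinner k
      _ = ∑ i, ∑ j, (pd (fun y => ω y i j) k x * pd a i x * pd b j x
            + ω x i j * pd (fun y => pd a k y) i x * pd b j x
            + ω x i j * pd a i x * pd (fun y => pd b k y) j x) := by
          refine Finset.sum_congr rfl fun i _ => ?_
          rw [pd_sum (fun j => hterm i j) k]
          exact Finset.sum_congr rfl fun j _ => step i j
      _ = _ := sum_alg (fun i j => ω x i j) (fun i j => pd (fun y => ω y i j) k x)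
            (fun p q => Γ x p q k) (fun i => pd a i x) (fun i => pd b i x)
            (fun i => pd (fun y => pd a k y) i x) (fun j => pd (fun y => pd b k y) j x)
            (hωanti x hx) hdw
end

section
/- Let ω^{ij} be a smooth antisymmetric bivector and Γ^i_{jk} a connection on an open set U ⊆ ℝ^N satisfying the compatibility ω^{ij}_{;m} + ω^{ik} T^j_{km} − ω^{jk} T^i_{km} = 0. Then ω satisfies the Jacobi identity (i.e. the cyclic sum over (i,j,k) of ω^{is} ∂_s ω^{jk} vanishes) if and only if the cyclic sum over (i,j,k) of ω^{im} ω^{jn} T^k_{mn} vanishes, where T^i_{jk} = Γ^i_{jk} − Γ^i_{kj}. -/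
open scoped BigOperators

/-- Two double sums over a symmetric index domain are equal if the
symmetrized summands agree. -/
lemma sym_helper {N : ℕ} (A B : Fin N → Fin N → ℝ)
    (h : ∀ s l, A s l + A l s = B s l + B l s) :
    ∑ s, ∑ l, A s l = ∑ s, ∑ l, B s l := by
  have hA : (∑ s, ∑ l, A s l) = ∑ s, ∑ l, A l s := Finset.sum_comm
  have hB : (∑ s, ∑ l, B s l) = ∑ s, ∑ l, B l s := Finset.sum_comm
  have hh : (∑ s, ∑ l, (A s l + A l s)) = ∑ s, ∑ l, (B s l + B l s) :=
    Finset.sum_congr rfl fun s _ => Finset.sum_congr rfl fun l _ => h s l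
  simp only [Finset.sum_add_distrib] at hh
  linarith

/-- given the Poisson-compatibility
`ω^{ij}_{;m} + ω^{ik} T^j_{km} − ω^{jk} T^i_{km} = 0` on an open `U ⊆ ℝ^N`,
the Jacobi identity for `ω` (vanishing of the cyclic sum of `ω^{is} ∂_s ω^{jk}`)
holds iff the cyclic sum of `ω^{im} ω^{jn} T^k_{mn}` vanishes, where
`T^i_{jk} = Γ^i_{jk} − Γ^i_{kj}`. -/
theorem jacobi_iff_cyclic_torsion
    {N : ℕ} (U : Set (Fin N → ℝ)) (hU : IsOpen U)
    (ω : (Fin N → ℝ) → Fin N → Fin N → ℝ)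
    (Γ : (Fin N → ℝ) → Fin N → Fin N → Fin N → ℝ)
    (hω : ∀ i j, ContDiffOn ℝ (⊤ : ℕ∞) (fun x => ω x i j) U)
    (hωanti : ∀ x ∈ U, ∀ i j, ω x i j = -ω x j i)
    (hΓ : ∀ i j k, ContDiffOn ℝ (⊤ : ℕ∞) (fun x => Γ x i j k) U)
    (hcompat : ∀ x ∈ U, ∀ i j m : Fin N,
      (pd (fun y => ω y i j) m x + ∑ l, Γ x i m l * ω x l j + ∑ l, Γ x j m l * ω x i l)
        + (∑ k, ω x i k * (Γ x j k m - Γ x j m k))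
        - (∑ k, ω x j k * (Γ x i k m - Γ x i m k)) = 0) :
    (∀ x ∈ U, ∀ i j k : Fin N,
      (∑ s, ω x i s * pd (fun y => ω y j k) s x)
        + (∑ s, ω x j s * pd (fun y => ω y k i) s x)
        + (∑ s, ω x k s * pd (fun y => ω y i j) s x) = 0)
    ↔
    (∀ x ∈ U, ∀ i j k : Fin N,
      (∑ m, ∑ n, ω x i m * ω x j n * (Γ x k m n - Γ x k n m))
        + (∑ m, ∑ n, ω x j m * ω x k n * (Γ x i m n - Γ x i n m))
        + (∑ m, ∑ n, ω x k m * ω x i n * (Γ x j m n - Γ x j n m)) = 0) := by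
  -- First: solve the compatibility equation for the partial derivative.
  have key : ∀ x ∈ U, ∀ j k s : Fin N,
      pd (fun y => ω y j k) s x
        = ∑ l, (ω x k l * Γ x j l s - ω x j l * Γ x k l s) := by
    intro x hx j k s
    have h := hcompat x hx j k s
    have hsum :
        (∑ l, Γ x j s l * ω x l k) + (∑ l, Γ x k s l * ω x j l)
          + (∑ l, ω x j l * (Γ x k l s - Γ x k s l))
          - (∑ l, ω x k l * (Γ x j l s - Γ x j s l))
          = -∑ l, (ω x k l * Γ x j l s - ω x j l * Γ x k l s) := by
      rw [← Finset.sum_neg_distrib, ← Finset.sum_add_distrib, ← Finset.sum_add_distrib,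
        ← Finset.sum_sub_distrib]
      refine Finset.sum_congr rfl fun l _ => ?_
      rw [hωanti x hx l k]; ring
    linarith
  -- Main pointwise identity: the Jacobi cyclic sum equals the torsion cyclic sum.
  have E : ∀ x ∈ U, ∀ i j k : Fin N,
      (∑ s, ω x i s * pd (fun y => ω y j k) s x)
        + (∑ s, ω x j s * pd (fun y => ω y k i) s x)
        + (∑ s, ω x k s * pd (fun y => ω y i j) s x)
      = (∑ m, ∑ n, ω x i m * ω x j n * (Γ x k m n - Γ x k n m))
        + (∑ m, ∑ n, ω x j m * ω x k n * (Γ x i m n - Γ x i n m))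
        + (∑ m, ∑ n, ω x k m * ω x i n * (Γ x j m n - Γ x j n m)) := by
    intro x hx i j k
    have e1 : ∑ s, ω x i s * pd (fun y => ω y j k) s x
        = ∑ s, ∑ l, ω x i s * (ω x k l * Γ x j l s - ω x j l * Γ x k l s) :=
      Finset.sum_congr rfl fun s _ => by rw [key x hx j k s, Finset.mul_sum]
    have e2 : ∑ s, ω x j s * pd (fun y => ω y k i) s x
        = ∑ s, ∑ l, ω x j s * (ω x i l * Γ x k l s - ω x k l * Γ x i l s) :=
      Finset.sum_congr rfl fun s _ => by rw [key x hx k i s, Finset.mul_sum]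
    have e3 : ∑ s, ω x k s * pd (fun y => ω y i j) s x
        = ∑ s, ∑ l, ω x k s * (ω x j l * Γ x i l s - ω x i l * Γ x j l s) :=
      Finset.sum_congr rfl fun s _ => by rw [key x hx i j s, Finset.mul_sum]
    rw [e1, e2, e3]
    simp only [← Finset.sum_add_distrib]
    exact sym_helper _ _ fun s l => by ring
  constructor
  · intro H x hx i j k
    have := E x hx i j k
    have := H x hx i j k
    linarith
  · intro H x hx i j k
    have := E x hx i j k
    have := H x hx i j k
    linarith
end

section
/- Let g_{k l̄} = t² δ_{kl} − t⁴ conj(z^k) z^l on ℂⁿ with t² = 1/(1+|z|²), and let g^{i l̄} = t^{-2}(δ_{il} + z^i conj(z^l)) be its inverse. Then the Christoffel symbols of the Fubini–Study metric in holomorphic coordinates are Γ^i_{jk} := g^{i l̄} ∂_{z^j} g_{k l̄} = −t² (conj(z^j) δ_{ik} + conj(z^k) δ_{ij}). Equivalently, the Levi-Civita covariant derivative satisfies ∇ dz^i = τ ⊗ dz^i + dz^i ⊗ τ where τ = t² Σ_k conj(z^k) dz^k. -/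
/-!
Differentiating `t² = (1 + Σ z^m z̄^m)⁻¹` gives `∂_j t² = -t⁴ z̄^j`, and then the metric satisfies
`∂_j g_{k l̄} = -t² (z̄^j g_{k l̄} + z̄^k g_{j l̄})`. Contracting with the inverse metric,
`g^{i l̄} g_{k l̄} = δ_{ik}`, gives the formula for `Γ^i_{jk}`.
-/

open scoped BigOperators
open Complex

/-- The Wirtinger derivative `∂f/∂z^i` of `f : ℂⁿ → ℂ` at `z`. -/
noncomputable def wirt {n : ℕ} (f : (Fin n → ℂ) → ℂ) (i : Fin n) (z : Fin n → ℂ) : ℂ :=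
  (1/2) * (fderiv ℝ f z (Pi.single i 1) - Complex.I * fderiv ℝ f z (Pi.single i Complex.I))

/-- `t² = 1/(1+|z|²)`. -/
noncomputable def t2 {n : ℕ} (z : Fin n → ℂ) : ℂ :=
  (1 + ∑ k, z k * (starRingEnd ℂ) (z k))⁻¹

/-- The Fubini–Study metric `g_{k l̄} = t² δ_{kl} − t⁴ conj(z^k) z^l` in the affine chart. -/
noncomputable def gFS {n : ℕ} (z : Fin n → ℂ) (k l : Fin n) : ℂ :=
  t2 z * (if k = l then 1 else 0) - (t2 z) ^ 2 * (starRingEnd ℂ) (z k) * z l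

/-- The inverse Fubini–Study metric `g^{i l̄} = t^{-2}(δ_{il} + z^i conj(z^l))`. -/
noncomputable def gFSinv {n : ℕ} (z : Fin n → ℂ) (i l : Fin n) : ℂ :=
  (t2 z)⁻¹ * ((if i = l then 1 else 0) + z i * (starRingEnd ℂ) (z l))

open ComplexConjugate

section Wirtinger

variable {n : ℕ} {f g : (Fin n → ℂ) → ℂ} {z : Fin n → ℂ}

theorem wirt_eq_of_hasFDerivAt {f' : (Fin n → ℂ) →L[ℝ] ℂ} (hf : HasFDerivAt f f' z) (i : Fin n) :
    wirt f i z = (1/2) * (f' (Pi.single i 1) - I * f' (Pi.single i I)) := by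
  rw [wirt, hf.fderiv]

theorem wirt_const (c : ℂ) (i : Fin n) : wirt (fun _ => c) i z = 0 := by
  simp [wirt]

theorem wirt_const_add (c : ℂ) (i : Fin n) : wirt (fun w => c + f w) i z = wirt f i z := by
  simp only [wirt, fderiv_const_add]

theorem wirt_sub (hf : DifferentiableAt ℝ f z) (hg : DifferentiableAt ℝ g z) (i : Fin n) :
    wirt (fun w => f w - g w) i z = wirt f i z - wirt g i z := by
  simp only [wirt, fderiv_fun_sub hf hg, sub_apply]
  ring

theorem wirt_mul (hf : DifferentiableAt ℝ f z) (hg : DifferentiableAt ℝ g z) (i : Fin n) :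
    wirt (fun w => f w * g w) i z = wirt f i z * g z + f z * wirt g i z := by
  simp only [wirt, fderiv_fun_mul hf hg, add_apply, smul_apply, smul_eq_mul]
  ring

theorem wirt_sum {ι : Type*} (s : Finset ι) {F : ι → (Fin n → ℂ) → ℂ}
    (hF : ∀ m ∈ s, DifferentiableAt ℝ (F m) z) (i : Fin n) :
    wirt (fun w => ∑ m ∈ s, F m w) i z = ∑ m ∈ s, wirt (F m) i z := by
  simp only [wirt, fderiv_fun_sum hF, sum_apply, Finset.mul_sum, ← Finset.sum_sub_distrib]

theorem wirt_inv (hf : DifferentiableAt ℝ f z) (hz : f z ≠ 0) (i : Fin n) :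
    wirt (fun w => (f w)⁻¹) i z = -(f z)⁻¹ ^ 2 * wirt f i z := by
  have hinv : HasFDerivAt (fun w => (f w)⁻¹) _ z :=
    (hasFDerivAt_inv' (𝕜 := ℝ) hz).comp z hf.hasFDerivAt
  rw [wirt_eq_of_hasFDerivAt hinv, wirt]
  simp only [ContinuousLinearMap.comp_apply, neg_apply, ContinuousLinearMap.mulLeftRight_apply]
  ring

theorem wirt_apply (i m : Fin n) : wirt (fun w => w m) i z = if i = m then 1 else 0 := by
  rw [wirt_eq_of_hasFDerivAt (hasFDerivAt_apply (𝕜 := ℝ) m z)]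
  by_cases h : i = m
  · subst h; norm_num
  · simp [Ne.symm h, h]

theorem wirt_conj_apply (i m : Fin n) : wirt (fun w => conj (w m)) i z = 0 := by
  have hconj : HasFDerivAt (fun w : Fin n → ℂ => conj (w m)) _ z :=
    conjCLE.toContinuousLinearMap.hasFDerivAt.comp z (hasFDerivAt_apply m z)
  rw [wirt_eq_of_hasFDerivAt hconj]
  by_cases h : i = m
  · subst h; simp
  · simp [Ne.symm h]

end Wirtinger

section FubiniStudy

variable {n : ℕ}

theorem one_add_sum_mul_conj_ne_zero (z : Fin n → ℂ) : 1 + ∑ m, z m * conj (z m) ≠ 0 := by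
  have hreal : 1 + ∑ m, z m * conj (z m) = ((1 + ∑ m, normSq (z m) : ℝ) : ℂ) := by
    push_cast
    simp only [mul_conj]
  rw [hreal, ofReal_ne_zero]
  exact (add_pos_of_pos_of_nonneg one_pos (Finset.sum_nonneg fun m _ => normSq_nonneg _)).ne'

theorem inv_t2 (z : Fin n → ℂ) : (t2 z)⁻¹ = 1 + ∑ m, z m * conj (z m) := inv_inv _

theorem t2_mul_inv_t2 (z : Fin n → ℂ) : t2 z * (t2 z)⁻¹ = 1 :=
  mul_inv_cancel₀ (inv_ne_zero (one_add_sum_mul_conj_ne_zero z))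

@[fun_prop]
theorem differentiableAt_t2 (z : Fin n → ℂ) : DifferentiableAt ℝ t2 z :=
  DifferentiableAt.inv (by fun_prop) (one_add_sum_mul_conj_ne_zero z)

theorem wirt_t2 (z : Fin n → ℂ) (j : Fin n) : wirt t2 j z = -t2 z ^ 2 * conj (z j) := by
  have hsq : wirt (fun w => 1 + ∑ m, w m * conj (w m)) j z = conj (z j) := by
    rw [wirt_const_add, wirt_sum _ (fun m _ => by fun_prop)]
    calc ∑ m, wirt (fun w => w m * conj (w m)) j z = ∑ m, if j = m then conj (z m) else 0 :=
          Finset.sum_congr rfl fun m _ => by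
            rw [wirt_mul (by fun_prop) (by fun_prop), wirt_apply, wirt_conj_apply]
            simp
      _ = conj (z j) := by simp
  calc wirt t2 j z = wirt (fun w => (1 + ∑ m, w m * conj (w m))⁻¹) j z := rfl
    _ = -t2 z ^ 2 * conj (z j) := by
      rw [wirt_inv (by fun_prop) (one_add_sum_mul_conj_ne_zero z), hsq]
      rfl

theorem wirt_gFS (z : Fin n → ℂ) (j k l : Fin n) :
    wirt (fun w => gFS w k l) j z = -t2 z * (conj (z j) * gFS z k l + conj (z k) * gFS z j l) := by
  have hgFS : (fun w => gFS w k l)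
      = fun w => t2 w * (if k = l then 1 else 0) - t2 w * t2 w * conj (w k) * w l := by
    funext w
    rw [gFS, sq]
  rw [hgFS, wirt_sub (by fun_prop) (by fun_prop), wirt_mul (by fun_prop) (by fun_prop),
    wirt_mul (by fun_prop) (by fun_prop), wirt_mul (by fun_prop) (by fun_prop),
    wirt_mul (by fun_prop) (by fun_prop), wirt_t2, wirt_const, wirt_conj_apply, wirt_apply, gFS, gFS]
  ring

theorem sum_gFSinv_mul_gFS (z : Fin n → ℂ) (i k : Fin n) :
    ∑ l, gFSinv z i l * gFS z k l = if i = k then 1 else 0 := by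
  have hterm : ∀ l, gFSinv z i l * gFS z k l
      = (if i = l then 1 else 0) * ((t2 z)⁻¹ * gFS z k l)
        + (if k = l then 1 else 0) * (z i * conj (z l))
        - t2 z * z i * conj (z k) * (z l * conj (z l)) := fun l => by
    rw [gFSinv, gFS]
    linear_combination ((if k = l then 1 else 0) * z i * conj (z l)
      - t2 z * z i * conj (z k) * z l * conj (z l)) * t2_mul_inv_t2 z
  rw [Finset.sum_congr rfl fun l _ => hterm l]
  simp only [Finset.sum_sub_distrib, Finset.sum_add_distrib, ite_mul, one_mul, zero_mul,
    Finset.sum_ite_eq, Finset.mem_univ, if_true, ← Finset.mul_sum]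
  rw [gFS]
  simp only [@eq_comm _ k i]
  linear_combination ((if i = k then 1 else 0) - (1 + t2 z) * z i * conj (z k)) * t2_mul_inv_t2 z
    + t2 z * z i * conj (z k) * inv_t2 z

end FubiniStudy

/-- the Christoffel symbols of the Fubini–Study metric in holomorphic
coordinates are `Γ^i_{jk} = g^{i l̄} ∂_{z^j} g_{k l̄} = −t²(conj(z^j) δ_{ik} + conj(z^k) δ_{ij})`. -/
theorem fubini_study_christoffel
    {n : ℕ} (z : Fin n → ℂ) (i j k : Fin n) :
    (∑ l, gFSinv z i l * wirt (fun w => gFS w k l) j z)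
      = -(t2 z) * ((starRingEnd ℂ) (z j) * (if i = k then 1 else 0)
          + (starRingEnd ℂ) (z k) * (if i = j then 1 else 0)) := by
  calc ∑ l, gFSinv z i l * wirt (fun w => gFS w k l) j z
      = -t2 z * (conj (z j) * ∑ l, gFSinv z i l * gFS z k l
          + conj (z k) * ∑ l, gFSinv z i l * gFS z j l) := by
        simp only [wirt_gFS, Finset.mul_sum, ← Finset.sum_add_distrib]
        exact Finset.sum_congr rfl fun l _ => by ring
    _ = _ := by rw [sum_gFSinv_mul_gFS, sum_gFSinv_mul_gFS]
end

section
/- On ℂⁿ define the Poisson bracket on smooth functions by the biderivation determined by {z^i, z^j} = 0, {conj(z^i), conj(z^j)} = 0, and {z^i, conj(z^j)} = i (1+|z|²)(δ_{ij} + z^i conj(z^j)). Set w^i = z^i / √(1+|z|²) for i = 1,…,n. Then {w^i, w^j} = 0 and {w^i, conj(w^j)} = i δ_{ij} for all i,j. -/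
open scoped BigOperators
open Complex

/-- The conjugate Wirtinger derivative `∂f/∂conj(z^i)` at `z`. -/
noncomputable def wirtBar {n : ℕ} (f : (Fin n → ℂ) → ℂ) (i : Fin n) (z : Fin n → ℂ) : ℂ :=
  (1/2) * (fderiv ℝ f z (Pi.single i 1) + Complex.I * fderiv ℝ f z (Pi.single i Complex.I))

/-- The Poisson bivector `P^{i j̄} = {z^i, conj(z^j)} = i (1+|z|²)(δ_{ij} + z^i conj(z^j))`. -/
noncomputable def Pbiv {n : ℕ} (z : Fin n → ℂ) (i j : Fin n) : ℂ :=
  Complex.I * (1 + ∑ k, z k * (starRingEnd ℂ) (z k)) *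
    ((if i = j then 1 else 0) + z i * (starRingEnd ℂ) (z j))

/-- The Poisson bracket on smooth functions of `z, z̄` determined by
`{z^i,z^j} = {z̄^i,z̄^j} = 0` and `{z^i, z̄^j} = P^{i j̄}`, written via Wirtinger
derivatives: `{a,b} = Σ P^{i j̄}(∂_i a ∂_{j̄} b − ∂_i b ∂_{j̄} a)`. -/
noncomputable def pbr {n : ℕ} (a b : (Fin n → ℂ) → ℂ) (z : Fin n → ℂ) : ℂ :=
  ∑ i, ∑ j, Pbiv z i j * (wirt a i z * wirtBar b j z - wirt b i z * wirtBar a j z)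

/-- The canonical coordinates `w^i = z^i / √(1+|z|²)`. -/
noncomputable def wcoord {n : ℕ} (i : Fin n) (z : Fin n → ℂ) : ℂ :=
  z i * ((Real.sqrt (1 + ∑ k, Complex.normSq (z k)) : ℂ))⁻¹

/-! With `α = (1 + |z|²)^(-1/2)` the Wirtinger gradients of `w^i = α z^i` are
`∂w^i = α e_i - (α³ z^i / 2) z̄` and `∂̄w^i = -(α³ z^i / 2) z`. Since `P^{l m̄}` is `i(1+|z|²)` times
`δ_{lm} + z^l z̄^m`, the bracket `{a, b}` is `i(1+|z|²)` times the difference of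
`∂a·∂̄b + (z·∂a)(z̄·∂̄b)` and the same expression with `a, b` swapped. For `a = w^i, b = w^j` this
expression is symmetric in `i, j`; for `a = w^i, b = w̄^j` everything except `α² δ_{ij}` cancels
by the single relation `α² (1 + |z|²) = 1`. -/

open ComplexConjugate

section

variable {n : ℕ}

noncomputable def wirtVec (f : (Fin n → ℂ) → ℂ) (z : Fin n → ℂ) : Fin n → ℂ :=
  fun l => wirt f l z

noncomputable def wirtBarVec (f : (Fin n → ℂ) → ℂ) (z : Fin n → ℂ) : Fin n → ℂ :=
  fun l => wirtBar f l z

theorem sum_sum_ite_add_mul_mul {ι R : Type*} [Fintype ι] [DecidableEq ι] [CommSemiring R]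
    (x y a b : ι → R) :
    ∑ l, ∑ m, ((if l = m then 1 else 0) + x l * y m) * (a l * b m) =
      a ⬝ᵥ b + (x ⬝ᵥ a) * (y ⬝ᵥ b) := by
  simp only [add_mul, Finset.sum_add_distrib, ite_mul, one_mul, zero_mul, Finset.sum_ite_eq,
    Finset.mem_univ, if_true, dotProduct, Finset.sum_mul_sum]
  congr 1
  exact Finset.sum_congr rfl fun l _ => Finset.sum_congr rfl fun m _ => by ring

theorem pbr_eq_dotProduct (a b : (Fin n → ℂ) → ℂ) (z : Fin n → ℂ) :
    pbr a b z = I * (1 + z ⬝ᵥ star z) *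
      ((wirtVec a z ⬝ᵥ wirtBarVec b z + (z ⬝ᵥ wirtVec a z) * (star z ⬝ᵥ wirtBarVec b z)) -
        (wirtVec b z ⬝ᵥ wirtBarVec a z + (z ⬝ᵥ wirtVec b z) * (star z ⬝ᵥ wirtBarVec a z))) := by
  rw [← sum_sum_ite_add_mul_mul, ← sum_sum_ite_add_mul_mul, ← Finset.sum_sub_distrib,
    Finset.mul_sum]
  refine Finset.sum_congr rfl fun l _ => ?_
  rw [← Finset.sum_sub_distrib, Finset.mul_sum]
  refine Finset.sum_congr rfl fun m _ => ?_
  simp only [Pbiv, wirtVec, wirtBarVec, dotProduct, Pi.star_apply, Complex.star_def]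
  ring

theorem fderiv_conj_apply (f : (Fin n → ℂ) → ℂ) (z v : Fin n → ℂ) :
    fderiv ℝ (fun u => conj (f u)) z v = conj (fderiv ℝ f z v) :=
  congrArg (fun L => L v) (conjCLE.comp_fderiv (f := f) (x := z))

theorem wirtVec_conj (f : (Fin n → ℂ) → ℂ) (z : Fin n → ℂ) :
    wirtVec (fun u => conj (f u)) z = star (wirtBarVec f z) := by
  ext l
  simp only [wirtVec, wirtBarVec, wirt, wirtBar, Pi.star_apply, Complex.star_def,
    fderiv_conj_apply, map_mul, map_add, map_div₀, map_one, map_ofNat, conj_I]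
  ring

theorem wirtBarVec_conj (f : (Fin n → ℂ) → ℂ) (z : Fin n → ℂ) :
    wirtBarVec (fun u => conj (f u)) z = star (wirtVec f z) := by
  ext l
  simp only [wirtVec, wirtBarVec, wirt, wirtBar, Pi.star_apply, Complex.star_def,
    fderiv_conj_apply, map_mul, map_sub, map_div₀, map_one, map_ofNat, conj_I]
  ring

theorem wirtVec_eq_of_fderiv_eq {f : (Fin n → ℂ) → ℂ} {z A B : Fin n → ℂ}
    (hf : ∀ v, fderiv ℝ f z v = A ⬝ᵥ v + B ⬝ᵥ star v) : wirtVec f z = A := by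
  ext l
  simp only [wirtVec, wirt, hf, ← Pi.single_star, dotProduct_single, star_one, Complex.star_def,
    conj_I]
  linear_combination (B l - A l) / 2 * I_mul_I

theorem wirtBarVec_eq_of_fderiv_eq {f : (Fin n → ℂ) → ℂ} {z A B : Fin n → ℂ}
    (hf : ∀ v, fderiv ℝ f z v = A ⬝ᵥ v + B ⬝ᵥ star v) : wirtBarVec f z = B := by
  ext l
  simp only [wirtBarVec, wirtBar, hf, ← Pi.single_star, dotProduct_single, star_one,
    Complex.star_def, conj_I]
  linear_combination (A l - B l) / 2 * I_mul_I

theorem ofReal_two_nsmul_inner (a b : ℂ) :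
    ((2 • inner ℝ a b : ℝ) : ℂ) = conj a * b + a * conj b := by
  rw [Complex.inner, nsmul_eq_mul, ofReal_mul, re_eq_add_conj]
  simp only [map_mul, conj_conj]
  push_cast
  ring

noncomputable def invRadius (z : Fin n → ℂ) : ℂ := ((√(1 + ∑ k, normSq (z k)) : ℝ) : ℂ)⁻¹

theorem one_add_sum_normSq_pos (z : Fin n → ℂ) : 0 < 1 + ∑ k, normSq (z k) :=
  add_pos_of_pos_of_nonneg one_pos (Finset.sum_nonneg fun _ _ => normSq_nonneg _)

theorem conj_invRadius (z : Fin n → ℂ) : conj (invRadius z) = invRadius z := by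
  simp [invRadius]

theorem invRadius_sq_mul (z : Fin n → ℂ) : invRadius z ^ 2 * (1 + z ⬝ᵥ star z) = 1 := by
  have hS := one_add_sum_normSq_pos z
  have hsum : (1 + z ⬝ᵥ star z : ℂ) = ((1 + ∑ k, normSq (z k) : ℝ) : ℂ) := by
    simp [dotProduct, mul_conj]
  have hr : ((√(1 + ∑ k, normSq (z k)) : ℝ) : ℂ) ≠ 0 := by
    exact_mod_cast (Real.sqrt_pos.2 hS).ne'
  rw [hsum, ← Real.sq_sqrt hS.le, invRadius]
  push_cast
  field_simp

theorem fderiv_wcoord_apply (i : Fin n) (z v : Fin n → ℂ) :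
    fderiv ℝ (wcoord i) z v =
      (invRadius z • Pi.single i 1 - (invRadius z ^ 3 * z i / 2) • star z) ⬝ᵥ v +
        (-(invRadius z ^ 3 * z i / 2) • z) ⬝ᵥ star v := by
  have hS := one_add_sum_normSq_pos z
  have hsum : HasFDerivAt (fun u : Fin n → ℂ => 1 + ∑ k, ‖u k‖ ^ 2) _ z :=
    (HasFDerivAt.fun_sum fun k _ => (hasFDerivAt_apply k z).norm_sq).const_add 1
  simp only [← normSq_eq_norm_sq] at hsum
  have hinv := (Real.hasDerivAt_sqrt hS.ne').inv (Real.sqrt_pos.2 hS).ne'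
  have h := (hasFDerivAt_apply i z).mul
    (ofRealCLM.hasFDerivAt.comp z (hinv.comp_hasFDerivAt z hsum))
  have hw : wcoord i =
      (fun u => u i) * ofRealCLM ∘ (fun x => √x)⁻¹ ∘ fun u => 1 + ∑ k, normSq (u k) := by
    funext u
    simp [wcoord]
  rw [hw, h.fderiv]
  simp only [add_apply, smul_apply, ContinuousLinearMap.comp_apply, sum_apply,
    ContinuousLinearMap.proj_apply, coe_innerSL_apply, ofRealCLM_apply, Function.comp_apply,
    Pi.inv_apply, smul_eq_mul, ofReal_mul, ofReal_sum, ofReal_two_nsmul_inner]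
  simp only [sub_dotProduct, neg_smul, neg_dotProduct, smul_dotProduct, single_dotProduct,
    smul_eq_mul]
  simp only [dotProduct, Finset.sum_add_distrib, Pi.star_apply, Complex.star_def, invRadius]
  push_cast
  ring

theorem wirtVec_wcoord (i : Fin n) (z : Fin n → ℂ) :
    wirtVec (wcoord i) z = invRadius z • Pi.single i 1 - (invRadius z ^ 3 * z i / 2) • star z :=
  wirtVec_eq_of_fderiv_eq (fderiv_wcoord_apply i z)

theorem wirtBarVec_wcoord (i : Fin n) (z : Fin n → ℂ) :
    wirtBarVec (wcoord i) z = -(invRadius z ^ 3 * z i / 2) • z :=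
  wirtBarVec_eq_of_fderiv_eq (fderiv_wcoord_apply i z)

theorem wirtVec_conj_wcoord (j : Fin n) (z : Fin n → ℂ) :
    wirtVec (fun u => conj (wcoord j u)) z = -(invRadius z ^ 3 * conj (z j) / 2) • star z := by
  rw [wirtVec_conj, wirtBarVec_wcoord, star_smul]
  simp [conj_invRadius]

theorem wirtBarVec_conj_wcoord (j : Fin n) (z : Fin n → ℂ) :
    wirtBarVec (fun u => conj (wcoord j u)) z =
      invRadius z • Pi.single j 1 - (invRadius z ^ 3 * conj (z j) / 2) • z := by
  rw [wirtBarVec_conj, wirtVec_wcoord]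
  simp [conj_invRadius]

theorem pbr_wcoord_wcoord (i j : Fin n) (z : Fin n → ℂ) : pbr (wcoord i) (wcoord j) z = 0 := by
  rw [pbr_eq_dotProduct, wirtVec_wcoord, wirtVec_wcoord, wirtBarVec_wcoord, wirtBarVec_wcoord]
  simp only [sub_dotProduct, dotProduct_sub, neg_smul, dotProduct_neg, smul_dotProduct,
    dotProduct_smul, single_dotProduct, dotProduct_single, smul_eq_mul, one_mul, mul_one]
  rw [dotProduct_comm (star z) z]
  ring

theorem pbr_wcoord_conj_wcoord (i j : Fin n) (z : Fin n → ℂ) :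
    pbr (wcoord i) (fun u => conj (wcoord j u)) z = I * (if i = j then 1 else 0) := by
  rw [pbr_eq_dotProduct, wirtVec_wcoord, wirtBarVec_wcoord, wirtVec_conj_wcoord,
    wirtBarVec_conj_wcoord]
  simp only [sub_dotProduct, dotProduct_sub, neg_smul, neg_dotProduct, dotProduct_neg,
    smul_dotProduct, dotProduct_smul, single_dotProduct, dotProduct_single, smul_eq_mul, one_mul,
    mul_one, Pi.sub_apply, Pi.smul_apply, Pi.star_apply, Complex.star_def]
  rw [Pi.single_comm, Pi.single_apply, dotProduct_comm (star z) z]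
  linear_combination
    I * ((if i = j then 1 else 0) - (1 + z ⬝ᵥ star z) * z i * conj (z j) * invRadius z ^ 2) *
      invRadius_sq_mul z

end

/-- in the coordinates `w^i = z^i/√(1+|z|²)` the ℂPⁿ Poisson bracket
takes the canonical form `{w^i, w^j} = 0`, `{w^i, conj(w^j)} = i δ_{ij}`. -/
theorem cpn_bracket_canonical_form
    {n : ℕ} (i j : Fin n) (z : Fin n → ℂ) :
    pbr (wcoord i) (wcoord j) z = 0 ∧
    pbr (wcoord i) (fun u => (starRingEnd ℂ) (wcoord j u)) z
      = Complex.I * (if i = j then 1 else 0) :=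
  ⟨pbr_wcoord_wcoord i j z, pbr_wcoord_conj_wcoord i j z⟩
end
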